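/- For the substitution ϱ_m with m = ℓ(ℓ+1), the recoding a = 0, b = 1^{ℓ+1} conjugates ϱ_m to the constant-length substitution a ↦ a b^ℓ, b ↦ a^{ℓ+1}: applying ϱ_m to 0 gives 0·1^{ℓ(ℓ+1)}, which decodes as a·b^ℓ, and applying ϱ_m to 1^{ℓ+1} gives 0^{ℓ+1}, which decodes as a^{ℓ+1}; both images have length ℓ+1 in the new alphabet. -/

import Mathlib

/-- The substitution ϱ_m : 0 ↦ 0 1^m, 1 ↦ 0, on letters. -/
def substLetter (m : ℕ) : Fin 2 → List (Fin 2)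
  | 0 => 0 :: List.replicate m 1
  | 1 => [0]

/-- Extension of ϱ_m to words by concatenation. -/
def subst (m : ℕ) (w : List (Fin 2)) : List (Fin 2) := w.flatMap (substLetter m)

theorem subst_singleton_zero (m : ℕ) : subst m [0] = 0 :: List.replicate m 1 := by
  simp [subst, substLetter]

theorem subst_replicate_one (m n : ℕ) : subst m (List.replicate n 1) = List.replicate n 0 := by
  rw [subst, List.flatMap_replicate, substLetter, ← List.replicate_one,
    List.flatten_replicate_replicate, Nat.mul_one]

theorem recoding_constant_length_general (ℓ : ℕ) (m : ℕ) (hm : m = ℓ * (ℓ + 1)) :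
    -- ϱ_m(0) = 0 · 1^{ℓ(ℓ+1)}, which decodes as the block a followed by ℓ blocks b = 1^{ℓ+1}
    subst m [0] = [0] ++ (List.replicate ℓ (List.replicate (ℓ + 1) (1 : Fin 2))).flatten ∧
    -- ϱ_m(1^{ℓ+1}) = 0^{ℓ+1}, which decodes as ℓ+1 blocks a
    subst m (List.replicate (ℓ + 1) 1) = List.replicate (ℓ + 1) 0 ∧
    -- both images have length ℓ+1 in the new alphabet {a, b}
    1 + ℓ = ℓ + 1 ∧ (List.replicate (ℓ + 1) (0 : Fin 2)).length = ℓ + 1 := by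
  refine ⟨?_, subst_replicate_one m (ℓ + 1), Nat.add_comm 1 ℓ, List.length_replicate⟩
  rw [subst_singleton_zero, List.flatten_replicate_replicate, hm]
  rfl

theorem recoding_constant_length (ℓ : ℕ) (hℓ : 0 < ℓ) (m : ℕ) (hm : m = ℓ * (ℓ + 1)) :
    -- ϱ_m(0) = 0 · 1^{ℓ(ℓ+1)}, which decodes as the block a followed by ℓ blocks b = 1^{ℓ+1}
    subst m [0] = [0] ++ (List.replicate ℓ (List.replicate (ℓ + 1) (1 : Fin 2))).flatten ∧
    -- ϱ_m(1^{ℓ+1}) = 0^{ℓ+1}, which decodes as ℓ+1 blocks a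
    subst m (List.replicate (ℓ + 1) 1) = List.replicate (ℓ + 1) 0 ∧
    -- both images have length ℓ+1 in the new alphabet {a, b}
    1 + ℓ = ℓ + 1 ∧ (List.replicate (ℓ + 1) (0 : Fin 2)).length = ℓ + 1 :=
  recoding_constant_length_general ℓ m hm
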